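/- arXiv:2008.12165 — 2 statements merged into one kernel-verified Lean document; each statement's English description precedes it below -/
import Mathlib

section
/- (Precise form of Remark 3) Let a, n₁,…,n_m be unit-norm vectors in ℝ^d (‖a‖ = ‖nᵢ‖ = 1 for all i, m ≥ 1), and define the negative volume V⁻ = √(det((N−a)ᵀ(N−a))) where N−a is the d×m matrix with columns nᵢ − a, and let d(a, {n₁,…,n_m}) = min_{1≤i≤m} ‖nᵢ − a‖ be the point-to-set distance from the anchor a to the negative set. Then d(a, {n₁,…,n_m}) ≥ V⁻ / 2^{m−1}. In particular, a large negative volume forces a large point-to-set distance between the anchor and its negatives. -/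
/-!
The Gram determinant `det ((N−a)ᵀ(N−a))` is the squared volume of the parallelotope spanned by
the `nᵢ − a`, so Hadamard's inequality bounds `V⁻` by `∏ ‖nᵢ − a‖`. All factors are at most
`‖nᵢ‖ + ‖a‖ = 2`, hence the product is at most `2^{m−1}` times the smallest one.
Hadamard's inequality itself follows by writing the vectors in a Gram–Schmidt orthonormal basis of
their span, where the Gram determinant becomes `∏ ⟪bᵢ, vᵢ⟫²`.
-/

/-- The `d × p` matrix whose `i`-th column is the vector `sᵢ ∈ ℝ^d`. -/
def colMatrix (d p : ℕ) (s : Fin p → EuclideanSpace ℝ (Fin d)) :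
    Matrix (Fin d) (Fin p) ℝ :=
  Matrix.of fun i j => s j i

open Matrix InnerProductSpace Module

section Hadamard

variable {E : Type*} [NormedAddCommGroup E] [InnerProductSpace ℝ E]

theorem Matrix.det_gram_le_prod_norm_sq_of_finrank_eq {ι : Type*} [Fintype ι] [DecidableEq ι]
    [FiniteDimensional ℝ E] (h : finrank ℝ E = Fintype.card ι) (v : ι → E) :
    (gram ℝ v).det ≤ ∏ i, ‖v i‖ ^ 2 := by
  set e := Fintype.equivFin ι
  rw [← det_submatrix_equiv_self e.symm, ← e.symm.prod_comp]
  set w := v ∘ e.symm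
  change (gram ℝ w).det ≤ _
  set b := gramSchmidtOrthonormalBasis (h.trans (Fintype.card_fin _).symm) w
  have hgram : gram ℝ w = (b.toBasis.toMatrix w)ᵀ * b.toBasis.toMatrix w := by
    rw [gram_eq_conjTranspose_mul b, conjTranspose_eq_transpose_of_trivial]
    rfl
  -- Gram–Schmidt makes the coordinate matrix of `w` upper triangular.
  have hdet : (b.toBasis.toMatrix w).det = ∏ i, ⟪b i, w i⟫_ℝ := by
    rw [← Basis.det_apply, gramSchmidtOrthonormalBasis_det]
  rw [hgram, det_mul, det_transpose, hdet, ← Finset.prod_mul_distrib]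
  refine Finset.prod_le_prod (fun i _ => mul_self_nonneg _) fun i _ => ?_
  rw [← sq, ← sq_abs]
  gcongr
  calc |⟪b i, w i⟫_ℝ| ≤ ‖b i‖ * ‖w i‖ := abs_real_inner_le_norm _ _
    _ = ‖w i‖ := by rw [b.orthonormal.1 i, one_mul]

theorem Matrix.det_gram_le_prod_norm_sq {ι : Type*} [Fintype ι] [DecidableEq ι] (v : ι → E) :
    (gram ℝ v).det ≤ ∏ i, ‖v i‖ ^ 2 := by
  by_cases hv : LinearIndependent ℝ v
  · have := FiniteDimensional.span_of_finite ℝ (Set.finite_range v)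
    let f : ι → Submodule.span ℝ (Set.range v) := fun i => ⟨v i, Submodule.subset_span ⟨i, rfl⟩⟩
    exact det_gram_le_prod_norm_sq_of_finrank_eq (finrank_span_eq_card hv) f
  · rw [← det_gram_ne_zero_iff_linearIndependent, not_not] at hv
    rw [hv]
    positivity

theorem Matrix.sqrt_det_gram_le_prod_norm {ι : Type*} [Fintype ι] [DecidableEq ι] (v : ι → E) :
    √(gram ℝ v).det ≤ ∏ i, ‖v i‖ := by
  rw [← Real.sqrt_sq (by positivity : 0 ≤ ∏ i, ‖v i‖), ← Finset.prod_pow]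
  exact Real.sqrt_le_sqrt (det_gram_le_prod_norm_sq v)

end Hadamard

theorem colMatrix_transpose_mul_self (d p : ℕ) (s : Fin p → EuclideanSpace ℝ (Fin d)) :
    (colMatrix d p s)ᵀ * colMatrix d p s = gram ℝ s := by
  ext i j
  simp [mul_apply, gram_apply, colMatrix, PiLp.inner_apply, mul_comm]

theorem Finset.prod_le_inf'_mul_pow_card_sub_one {ι R : Type*} [CommSemiring R] [LinearOrder R]
    [IsOrderedRing R] {s : Finset ι} (hs : s.Nonempty)
    {f : ι → R} {c : R} (hf₀ : ∀ i ∈ s, 0 ≤ f i) (hfc : ∀ i ∈ s, f i ≤ c) :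
    ∏ i ∈ s, f i ≤ s.inf' hs f * c ^ (s.card - 1) := by
  classical
  obtain ⟨i₀, hi₀, hmin⟩ := s.exists_mem_eq_inf' hs f
  rw [hmin, ← Finset.mul_prod_erase s f hi₀, ← Finset.card_erase_of_mem hi₀]
  have hrest : ∏ i ∈ s.erase i₀, f i ≤ c ^ (s.erase i₀).card :=
    (Finset.prod_le_prod (fun i hi => hf₀ i (Finset.mem_of_mem_erase hi))
      fun i hi => hfc i (Finset.mem_of_mem_erase hi)).trans_eq (Finset.prod_const c)
  exact mul_le_mul_of_nonneg_left hrest (hf₀ i₀ hi₀)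

/-- Precise form of Remark 3: for unit-norm anchor `a` and unit-norm
negatives `n₁,…,n_m` in `ℝ^d`, the point-to-set distance
`d(a, {n₁,…,n_m}) = minᵢ ‖nᵢ − a‖` satisfies
`d(a, {n₁,…,n_m}) ≥ V⁻ / 2^{m−1}`, where
`V⁻ = √(det ((N−a)ᵀ(N−a)))` is the negative volume. -/
theorem point_to_set_dist_ge_negative_volume_div
    (d m : ℕ) (hm : 0 < m)
    (a : EuclideanSpace ℝ (Fin d)) (n : Fin m → EuclideanSpace ℝ (Fin d))
    (ha : ‖a‖ = 1) (hn : ∀ i, ‖n i‖ = 1) :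
    (Finset.univ.inf' ⟨⟨0, hm⟩, Finset.mem_univ _⟩ fun i => ‖n i - a‖) ≥
      Real.sqrt (((colMatrix d m (fun i => n i - a))ᵀ *
        colMatrix d m (fun i => n i - a)).det) / 2 ^ (m - 1) := by
  have hdist_le_two (i : Fin m) : ‖n i - a‖ ≤ 2 := by
    simpa [hn i, ha, one_add_one_eq_two] using norm_sub_le (n i) a
  have hprod := Finset.univ.prod_le_inf'_mul_pow_card_sub_one ⟨⟨0, hm⟩, Finset.mem_univ _⟩
    (fun i _ => norm_nonneg (n i - a)) fun i _ => hdist_le_two i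
  rw [Finset.card_univ, Fintype.card_fin] at hprod
  rw [colMatrix_transpose_mul_self, ge_iff_le, div_le_iff₀ (by positivity)]
  exact (Matrix.sqrt_det_gram_le_prod_norm _).trans hprod
end

section
/- (Precise form of Remark 1) Let M be a real symmetric positive semidefinite d×d matrix, let r ≤ d, and let λ₁ ≥ λ₂ ≥ … ≥ λ_d ≥ 0 be the eigenvalues of M in decreasing order. Then the maximum of det(Qᵀ·M·Q) over all real d×r matrices Q with QᵀQ = I_r equals ∏_{i=1}^r λᵢ, the product of the r largest eigenvalues of M: for every such Q, det(QᵀMQ) ≤ ∏_{i=1}^r λᵢ, and there exists such a Q attaining equality. -/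
/-!
Diagonalize `M = W diag(λ) Wᵀ` with `W` orthogonal and put `P = Wᵀ Q`, so that `Pᵀ P = 1` and
`det (Qᵀ M Q) = det (Pᵀ diag(λ) P)`. By Cauchy–Binet this equals `∑_S (∏_{i ∈ S} λᵢ) det (P_S)²`,
summed over the `r`-element sets `S` of rows, while the same formula with `λ = 1` gives
`∑_S det (P_S)² = det (Pᵀ P) = 1`. So `det (Qᵀ M Q)` is a convex combination of the products
`∏_{i ∈ S} λᵢ`, each at most `λ₀ ⋯ λ_{r-1}` because `λ` is antitone and nonnegative; the first `r`
columns of `W` attain the bound.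
-/

open Matrix Finset

theorem Tuple.sort_comp_perm_of_strictMono {α : Type*} [LinearOrder α] {r : ℕ} {g : Fin r → α}
    (hg : StrictMono g) (σ : Equiv.Perm (Fin r)) : Tuple.sort (g ∘ σ) = σ⁻¹ := by
  have h := Tuple.comp_perm_comp_sort_eq_comp_sort (f := g) (σ := σ)
  rw [Tuple.sort_eq_refl_iff_monotone.2 hg.monotone] at h
  have : σ * Tuple.sort (g ∘ σ) = 1 := Equiv.ext fun i => hg.injective (congrFun h i)
  exact eq_inv_of_mul_eq_one_right this

theorem Tuple.exists_perm_comp_eq_of_map_univ_eq {α : Type*} [LinearOrder α] {n : ℕ}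
    {f g : Fin n → α} (h : univ.val.map f = univ.val.map g) :
    ∃ σ : Equiv.Perm (Fin n), f ∘ σ = g := by
  have hsorted : f ∘ Tuple.sort f = g ∘ Tuple.sort g := by
    refine List.ofFn_injective <| List.Perm.eq_of_sortedLE
      (Tuple.monotone_sort f).sortedLE_ofFn (Tuple.monotone_sort g).sortedLE_ofFn ?_
    refine ((Tuple.sort f).ofFn_comp_perm f).trans
      (List.Perm.trans ?_ ((Tuple.sort g).ofFn_comp_perm g).symm)
    rwa [← Multiset.coe_eq_coe, ← Fin.univ_val_map, ← Fin.univ_val_map]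
  refine ⟨Tuple.sort f * (Tuple.sort g)⁻¹, ?_⟩
  rw [Equiv.Perm.coe_mul, ← Function.comp_assoc, hsorted, Function.comp_assoc,
    ← Equiv.Perm.coe_mul, mul_inv_cancel, Equiv.Perm.coe_one, Function.comp_id]

theorem Finset.sum_injective_eq_sum_strictMono_sum_perm {α M : Type*} [Fintype α]
    [LinearOrder α] [AddCommMonoid M] {r : ℕ} (f : (Fin r → α) → M) :
    ∑ p : Fin r → α with Function.Injective p, f p =
      ∑ g : Fin r → α with StrictMono g, ∑ σ : Equiv.Perm (Fin r), f (g ∘ σ) := by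
  rw [← sum_product']
  refine sum_nbij' (fun p => (p ∘ Tuple.sort p, (Tuple.sort p)⁻¹)) (fun x => x.1 ∘ x.2)
    ?_ ?_ ?_ ?_ ?_
  · intro p hp
    simp only [mem_filter_univ] at hp
    simpa using (Tuple.monotone_sort p).strictMono_of_injective (hp.comp (Tuple.sort p).injective)
  · rintro ⟨g, σ⟩ h
    simp only [mem_product, mem_filter_univ] at h
    simpa using h.1.injective.comp σ.injective
  · intro p _
    ext i
    simp
  · rintro ⟨g, σ⟩ h
    simp only [mem_product, mem_filter_univ] at h
    simp [Tuple.sort_comp_perm_of_strictMono h.1, Function.comp_assoc]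
  · intro p _
    simp [Function.comp_assoc]

theorem Fin.val_le_val_of_strictMono {r d : ℕ} {g : Fin r → Fin d} (hg : StrictMono g) :
    ∀ i : Fin r, (i : ℕ) ≤ g i
  | ⟨0, _⟩ => Nat.zero_le _
  | ⟨k + 1, hk⟩ =>
    (val_le_val_of_strictMono hg ⟨k, by omega⟩).trans_lt (hg (Fin.mk_lt_mk.2 k.lt_succ_self))

theorem Finset.prod_comp_strictMono_le_prod_castLE {R : Type*} [CommMonoidWithZero R]
    [PartialOrder R] [ZeroLEOneClass R] [PosMulMono R] {r d : ℕ} (hr : r ≤ d) {lam : Fin d → R}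
    (hmono : Antitone lam) (hnonneg : ∀ i, 0 ≤ lam i) {g : Fin r → Fin d} (hg : StrictMono g) :
    ∏ i, lam (g i) ≤ ∏ i, lam (Fin.castLE hr i) :=
  prod_le_prod (fun _ _ => hnonneg _) fun i _ => hmono (Fin.val_le_val_of_strictMono hg i)

namespace Matrix

section CommRing

variable {R m : Type*} [CommRing R] [Fintype m] {r : ℕ}

theorem det_mul_eq_sum_prod_mul_det_submatrix (A : Matrix (Fin r) m R)
    (B : Matrix m (Fin r) R) :
    det (A * B) = ∑ p : Fin r → m, (∏ i, B (p i) i) * det (A.submatrix id p) := by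
  calc det (A * B) = ∑ p : Fin r → m, ∑ σ : Equiv.Perm (Fin r),
        (Equiv.Perm.sign σ : R) * ∏ i, A (σ i) (p i) * B (p i) i := by
        simp only [det_apply', mul_apply, prod_univ_sum, mul_sum, Fintype.piFinset_univ]
        rw [sum_comm]
    _ = _ := by
        refine sum_congr rfl fun p _ => ?_
        simp only [det_apply', mul_sum, submatrix_apply, id_eq, prod_mul_distrib]
        exact sum_congr rfl fun σ _ => by ring

/-- **Cauchy–Binet formula**. -/
theorem det_mul_eq_sum_det_submatrix_mul_det_submatrix [LinearOrder m]
    (A : Matrix (Fin r) m R) (B : Matrix m (Fin r) R) :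
    det (A * B) = ∑ g : Fin r → m with StrictMono g,
      det (A.submatrix id g) * det (B.submatrix g id) := by
  rw [det_mul_eq_sum_prod_mul_det_submatrix, ← sum_filter_of_ne (p := Function.Injective),
    sum_injective_eq_sum_strictMono_sum_perm]
  · have hperm (g : Fin r → m) (σ : Equiv.Perm (Fin r)) :
        det (A.submatrix id (g ∘ σ)) = Equiv.Perm.sign σ * det (A.submatrix id g) :=
      det_permute' σ (A.submatrix id g)
    refine sum_congr rfl fun g _ => ?_
    simp only [hperm, det_apply' (B.submatrix g id), mul_sum, submatrix_apply, id_eq,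
      Function.comp_apply]
    exact sum_congr rfl fun σ _ => by ring
  · intro p _ hp
    by_contra hinj
    obtain ⟨i, j, hpij, hij⟩ := Function.not_injective_iff.mp hinj
    exact hp (by rw [det_zero_of_column_eq hij fun k => by simp [hpij], mul_zero])

theorem det_transpose_mul_diagonal_mul [LinearOrder m] [DecidableEq m]
    (P : Matrix m (Fin r) R) (w : m → R) :
    det (Pᵀ * diagonal w * P) = ∑ g : Fin r → m with StrictMono g,
      (∏ i, w (g i)) * det (P.submatrix g id) ^ 2 := by
  rw [Matrix.mul_assoc, det_mul_eq_sum_det_submatrix_mul_det_submatrix]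
  refine sum_congr rfl fun g _ => ?_
  have hdiag : (diagonal w * P).submatrix g id = diagonal (w ∘ g) * P.submatrix g id := by
    ext i j
    simp [diagonal_mul]
  rw [← transpose_submatrix, det_transpose, hdiag, det_mul, det_diagonal]
  simp only [Function.comp_apply]
  ring

end CommRing

theorem det_transpose_mul_diagonal_mul_le {R : Type*} [CommRing R] [LinearOrder R]
    [IsStrictOrderedRing R] {r d : ℕ} (hr : r ≤ d) {P : Matrix (Fin d) (Fin r) R}
    (hP : Pᵀ * P = 1) {lam : Fin d → R} (hmono : Antitone lam) (hnonneg : ∀ i, 0 ≤ lam i) :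
    det (Pᵀ * diagonal lam * P) ≤ ∏ i, lam (Fin.castLE hr i) := by
  calc det (Pᵀ * diagonal lam * P)
      = ∑ g : Fin r → Fin d with StrictMono g, (∏ i, lam (g i)) * det (P.submatrix g id) ^ 2 :=
        det_transpose_mul_diagonal_mul P lam
    _ ≤ ∑ g : Fin r → Fin d with StrictMono g,
          (∏ i, lam (Fin.castLE hr i)) * det (P.submatrix g id) ^ 2 := by
        refine sum_le_sum fun g hg => mul_le_mul_of_nonneg_right ?_ (sq_nonneg _)
        exact prod_comp_strictMono_le_prod_castLE hr hmono hnonneg ((mem_filter_univ g).mp hg)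
    _ = (∏ i, lam (Fin.castLE hr i)) * det (Pᵀ * diagonal (1 : Fin d → R) * P) := by
        simp only [det_transpose_mul_diagonal_mul, Pi.one_apply, prod_const_one, one_mul, mul_sum]
    _ = ∏ i, lam (Fin.castLE hr i) := by
        rw [Pi.one_def, diagonal_one, Matrix.mul_one, hP, det_one, mul_one]

theorem transpose_submatrix_mul_mul_submatrix {R l m n : Type*} [Semiring R] [Fintype m]
    [Fintype n] (W : Matrix m n R) (N : Matrix m m R) (e : l → n) :
    (W.submatrix id e)ᵀ * N * W.submatrix id e = (Wᵀ * N * W).submatrix e e := by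
  rw [transpose_submatrix, submatrix_mul _ _ _ _ _ Function.bijective_id,
    submatrix_mul _ _ _ _ _ Function.bijective_id, submatrix_id_id]

open Polynomial in
theorem IsHermitian.exists_orthogonal_eq_mul_diagonal_mul_transpose {d : ℕ}
    {M : Matrix (Fin d) (Fin d) ℝ} (hM : M.IsHermitian) {lam : Fin d → ℝ}
    (hchar : M.charpoly = ∏ i, (X - C (lam i))) :
    ∃ W : Matrix (Fin d) (Fin d) ℝ, Wᵀ * W = 1 ∧ M = W * diagonal lam * Wᵀ := by
  obtain ⟨σ, rfl⟩ : ∃ σ : Equiv.Perm (Fin d), hM.eigenvalues ∘ σ = lam := by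
    apply Tuple.exists_perm_comp_eq_of_map_univ_eq
    have h := hM.roots_charpoly_eq_eigenvalues
    rw [hchar, roots_prod _ _ (prod_ne_zero_iff.mpr fun i _ => X_sub_C_ne_zero (lam i))] at h
    simpa using h.symm
  set U : Matrix (Fin d) (Fin d) ℝ := (hM.eigenvectorUnitary : Matrix (Fin d) (Fin d) ℝ)
  have hU : Uᵀ * U = 1 := by
    simpa [U, star_eq_conjTranspose] using mem_unitaryGroup_iff'.mp hM.eigenvectorUnitary.2
  have hMU : M = U * diagonal hM.eigenvalues * Uᵀ := by
    simpa [Unitary.conjStarAlgAut_apply, star_eq_conjTranspose] using hM.spectral_theorem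
  refine ⟨U.submatrix id σ, ?_, ?_⟩
  · rw [transpose_submatrix, ← submatrix_mul _ _ _ _ _ Function.bijective_id, hU,
      submatrix_one_equiv]
  · rw [← submatrix_diagonal_equiv, transpose_submatrix, submatrix_mul_equiv,
      submatrix_mul_equiv, submatrix_id_id]
    exact hMU

end Matrix

/-- Precise form of Remark 1: let `M` be a real symmetric positive
semidefinite `d × d` matrix with eigenvalues `λ₀ ≥ λ₁ ≥ … ≥ λ_{d-1} ≥ 0`
(listed with multiplicity, i.e. `charpoly M = ∏ᵢ (X − λᵢ)` with `λ`
antitone and nonnegative), and let `r ≤ d`. Then for every real `d × r`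
matrix `Q` with `Qᵀ Q = I_r` we have `det (Qᵀ M Q) ≤ ∏_{i < r} λᵢ`, and
some such `Q` attains equality; i.e. the maximum of `det (Qᵀ M Q)` over
isometric embeddings `Q` is the product of the `r` largest eigenvalues. -/
theorem max_det_compression_eq_prod_top_eigenvalues
    (d r : ℕ) (hr : r ≤ d) (M : Matrix (Fin d) (Fin d) ℝ)
    (hM : M.PosSemidef) (lam : Fin d → ℝ)
    (hmono : Antitone lam) (hnonneg : ∀ i, 0 ≤ lam i)
    (hchar : M.charpoly = ∏ i : Fin d, (Polynomial.X - Polynomial.C (lam i))) :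
    (∀ Q : Matrix (Fin d) (Fin r) ℝ, Qᵀ * Q = 1 →
        (Qᵀ * M * Q).det ≤ ∏ i : Fin r, lam (Fin.castLE hr i)) ∧
    (∃ Q : Matrix (Fin d) (Fin r) ℝ, Qᵀ * Q = 1 ∧
        (Qᵀ * M * Q).det = ∏ i : Fin r, lam (Fin.castLE hr i)) := by
  obtain ⟨W, hW, rfl⟩ := hM.1.exists_orthogonal_eq_mul_diagonal_mul_transpose hchar
  have hWW : W * Wᵀ = 1 := mul_eq_one_comm.mp hW
  refine ⟨fun Q hQ => ?_, ?_⟩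
  · have hconj : Qᵀ * (W * diagonal lam * Wᵀ) * Q =
        (Wᵀ * Q)ᵀ * diagonal lam * (Wᵀ * Q) := by
      simp only [transpose_mul, transpose_transpose, Matrix.mul_assoc]
    rw [hconj]
    refine det_transpose_mul_diagonal_mul_le hr ?_ hmono hnonneg
    rw [transpose_mul, transpose_transpose, Matrix.mul_assoc, ← Matrix.mul_assoc W, hWW,
      Matrix.one_mul, hQ]
  · have hcast : Function.Injective (Fin.castLE hr) := Fin.castLE_injective hr
    have hdiag : Wᵀ * (W * diagonal lam * Wᵀ) * W = diagonal lam := by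
      simp only [← Matrix.mul_assoc, hW, Matrix.one_mul]
      rw [Matrix.mul_assoc, hW, Matrix.mul_one]
    refine ⟨W.submatrix id (Fin.castLE hr), ?_, ?_⟩
    · rw [← Matrix.mul_one (W.submatrix id _)ᵀ, transpose_submatrix_mul_mul_submatrix,
        Matrix.mul_one, hW, submatrix_one _ hcast]
    · rw [transpose_submatrix_mul_mul_submatrix, hdiag, submatrix_diagonal _ _ hcast,
        det_diagonal]
      rfl
end
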